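/- arXiv:2102.04350 — 2 statements merged into one kernel-verified Lean document; each statement's English description precedes it below -/
import Mathlib

section
/- Let V be a nonempty finite type, N : V → Finset V an assignment of a nonempty neighbor set to each node, and f : ℕ with 1 ≤ f and f ≤ (N u).card for every u. Equip Ω = ∀ u : V, {s : Finset V // s ∈ (N u).powersetCard f} with the product P of the uniform probability measures on each coordinate (rows sampled independently). Let k ≥ 1 and let p : Fin (k+1) → V be a walk such that the restriction of p to the first k positions is injective (the nodes p 0, …, p (k-1) are pairwise distinct) and p i.succ ∈ N (p i.castSucc) for every i : Fin k. Then P {ω | ∀ i : Fin k, p i.succ ∈ (ω (p i.castSucc) : Finset V)} = ∏_{i : Fin k} (f : ℝ) / (N (p i.castSucc)).card. -/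
/-!
The event only constrains the sampled rows at the nodes `p 0, …, p (k-1)`. These nodes are
distinct and the rows are independent, so its probability is the product over the steps of the
probability that a uniform `f`-subset of `N u` contains a fixed neighbour `x`, which is
`C(n-1, f-1) / C(n, f) = f / n` for `n = |N u|`.
-/

open MeasureTheory

/-- Every set of finsets is measurable (discrete σ-algebra on `Finset α`). -/
local instance finsetMeasurableSpace (α : Type*) : MeasurableSpace (Finset α) := ⊤

open ProbabilityTheory Finset

theorem MeasureTheory.Measure.pi_setOf_forall_mem_of_injective {ι κ : Type*} [Fintype ι]
    [Fintype κ] {X : κ → Type*} [∀ u, MeasurableSpace (X u)] (μ : ∀ u, Measure (X u))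
    [∀ u, IsProbabilityMeasure (μ u)] {g : ι → κ} (hg : g.Injective)
    {S : ∀ i, Set (X (g i))} (hS : ∀ i, MeasurableSet (S i)) :
    Measure.pi μ {ω | ∀ i, ω (g i) ∈ S i} = ∏ i, μ (g i) (S i) := by
  have hindep : iIndepFun (fun i (ω : ∀ u, X u) ↦ ω (g i)) (Measure.pi μ) :=
    (iIndepFun_pi (X := fun _ x ↦ x) fun _ ↦ aemeasurable_id).precomp hg
  have hevent : {ω : ∀ u, X u | ∀ i, ω (g i) ∈ S i} = ⋂ i, (fun ω ↦ ω (g i)) ⁻¹' S i := by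
    ext; simp
  rw [hevent, hindep.meas_iInter fun i ↦ ⟨S i, hS i, rfl⟩]
  exact prod_congr rfl fun i _ ↦
    (measurePreserving_eval μ (g i)).measure_preimage (hS i).nullMeasurableSet

theorem ProbabilityTheory.inv_card_smul_count_eq_uniformOn_univ {α : Type*} [Fintype α]
    [MeasurableSpace α] :
    ((Fintype.card α : ENNReal)⁻¹ • Measure.count : Measure α) = uniformOn Set.univ := by
  ext s
  rw [uniformOn_univ, Measure.smul_apply, smul_eq_mul, ENNReal.div_eq_inv_mul]

theorem ProbabilityTheory.uniformOn_univ_setOf_val {β : Type*} [MeasurableSpace β]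
    [MeasurableSingletonClass β] (T : Finset β) (q : β → Prop) [DecidablePred q] :
    uniformOn (Set.univ : Set T) {b | q b} = #{b ∈ T | q b} / #T := by
  have hcount : Measure.count {b : T | q b} = #{b ∈ T | q b} := by
    rw [← coe_filter_univ, Measure.count_apply_finset, univ_eq_attach, filter_attach, card_map,
      card_attach]
  rw [uniformOn_univ, hcount, Fintype.card_coe]

theorem Finset.card_filter_mem_powersetCard_mul_card {α : Type*} [DecidableEq α] {A : Finset α}
    {x : α} (hx : x ∈ A) {f : ℕ} (hf : 1 ≤ f) :
    #{t ∈ A.powersetCard f | x ∈ t} * #A = f * #(A.powersetCard f) := by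
  have hcount := card_filter_powersetCard_subset {x} A f (singleton_subset_iff.2 hx) hf
  simp only [singleton_subset_iff, card_singleton] at hcount
  obtain ⟨n, hn⟩ : ∃ n, #A = n + 1 := ⟨#A - 1, by have := card_pos.2 ⟨x, hx⟩; omega⟩
  obtain ⟨m, rfl⟩ : ∃ m, f = m + 1 := ⟨f - 1, by omega⟩
  rw [hcount, card_powersetCard, hn, Nat.add_sub_cancel, Nat.add_sub_cancel, mul_comm,
    Nat.add_one_mul_choose_eq, mul_comm]

theorem ProbabilityTheory.uniformOn_univ_powersetCard_setOf_mem {α : Type*} [DecidableEq α]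
    [MeasurableSpace (Finset α)] [MeasurableSingletonClass (Finset α)] {A : Finset α} {x : α}
    (hx : x ∈ A) {f : ℕ} (hf : 1 ≤ f) (hfA : f ≤ #A) :
    uniformOn (Set.univ : Set (A.powersetCard f)) {t | x ∈ (t : Finset α)} = f / #A := by
  rw [uniformOn_univ_setOf_val _ (x ∈ ·), ENNReal.div_eq_div_iff]
  · rw [mul_comm, mul_comm (#(A.powersetCard f) : ENNReal)]
    exact_mod_cast card_filter_mem_powersetCard_mul_card hx hf
  · exact_mod_cast (card_pos.2 ⟨x, hx⟩).ne'
  · exact ENNReal.natCast_ne_top _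
  · exact_mod_cast (card_powersetCard f A ▸ Nat.choose_pos hfA).ne'
  · exact ENNReal.natCast_ne_top _

theorem gttf_path_existence_probability_general
    {V : Type*} [Fintype V]
    (N : V → Finset V)
    (f : ℕ) (hf1 : 1 ≤ f) (hf2 : ∀ u, f ≤ (N u).card)
    (P : Measure (∀ u : V, {s : Finset V // s ∈ (N u).powersetCard f}))
    (hP : P = Measure.pi (fun u =>
      (Fintype.card {s : Finset V // s ∈ (N u).powersetCard f} : ENNReal)⁻¹ •
        Measure.count))
    (k : ℕ) (p : Fin (k + 1) → V)
    (hinj : Function.Injective (fun i : Fin k => p i.castSucc))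
    (hwalk : ∀ i : Fin k, p i.succ ∈ N (p i.castSucc)) :
    P {ω | ∀ i : Fin k, p i.succ ∈ (ω (p i.castSucc) : Finset V)}
      = ENNReal.ofReal (∏ i : Fin k, (f : ℝ) / ((N (p i.castSucc)).card : ℝ)) := by
  classical
  have : ∀ u, Nonempty ((N u).powersetCard f) :=
    fun u ↦ (powersetCard_nonempty.2 (hf2 u)).to_subtype
  simp only [hP, inv_card_smul_count_eq_uniformOn_univ]
  refine (Measure.pi_setOf_forall_mem_of_injective (X := fun u ↦ (N u).powersetCard f) _ hinj
    (S := fun i ↦ {t | p i.succ ∈ (t : Finset V)}) fun _ ↦ .of_discrete).trans ?_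
  rw [ENNReal.ofReal_prod_of_nonneg fun _ _ ↦ by positivity]
  refine prod_congr rfl fun i _ ↦ ?_
  rw [uniformOn_univ_powersetCard_setOf_mem (hwalk i) hf1 (hf2 _),
    ENNReal.ofReal_div_of_pos (by exact_mod_cast card_pos.2 ⟨_, hwalk i⟩),
    ENNReal.ofReal_natCast, ENNReal.ofReal_natCast]

/-- Path-existence probability from the proof of Proposition 5 (UnbiasedMP):
when GTTF independently samples, for each node `u`, a uniformly random
`f`-element subset of its neighbor set `N u` as the retained outgoing edges, a
fixed walk `p` through pairwise distinct nodes survives in the sampled graph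
with probability `∏ i, f / |N (p i)|`. -/
theorem gttf_path_existence_probability
    {V : Type*} [Fintype V] [Nonempty V] [DecidableEq V]
    (N : V → Finset V) (hN : ∀ u, (N u).Nonempty)
    (f : ℕ) (hf1 : 1 ≤ f) (hf2 : ∀ u, f ≤ (N u).card)
    (P : Measure (∀ u : V, {s : Finset V // s ∈ (N u).powersetCard f}))
    (hP : P = Measure.pi (fun u =>
      (Fintype.card {s : Finset V // s ∈ (N u).powersetCard f} : ENNReal)⁻¹ •
        Measure.count))
    (k : ℕ) (hk : 1 ≤ k) (p : Fin (k + 1) → V)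
    (hinj : Function.Injective (fun i : Fin k => p i.castSucc))
    (hwalk : ∀ i : Fin k, p i.succ ∈ N (p i.castSucc)) :
    P {ω | ∀ i : Fin k, p i.succ ∈ (ω (p i.castSucc) : Finset V)}
      = ENNReal.ofReal (∏ i : Fin k, (f : ℝ) / ((N (p i.castSucc)).card : ℝ)) :=
  gttf_path_existence_probability_general N f hf1 hf2 P hP k p hinj hwalk
end

section
/- Let V be a nonempty finite type and A : Matrix V V ℝ a matrix with entries in {0, 1}. For each u let N u be the Finset of nodes v with A u v = 1, and suppose the graph is α-regular: (N u).card = α for every u, with 1 ≤ f ≤ α. Let C be the finite type of choice functions c : ∀ u : V, {s : Finset V // s ∈ (N u).powersetCard f} (one f-element neighbor subset per node), and for each c define the realized adjacency Ã(c) : Matrix V V ℝ by Ã(c) u v = if v ∈ (c u : Finset V) then 1 else 0. Then for all u v : V: (α : ℝ) * ∑_{c : C} Ã(c) u v = (Fintype.card C : ℝ) * f * A u v; equivalently, the average over all GTTF-realizable adjacency matrices equals (f/α) • A. -/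
/-!
Choosing the subsets node by node makes the set of choice functions a product, so summing the
indicator of `v ∈ c u` factors as (number of `f`-subsets of `N u` containing `v`) × (number of
choices at the other nodes). For `v ∈ N u` the first factor is `C(α - 1, f - 1)`, and
`α * C(α - 1, f - 1) = f * C(α, f)`; for `v ∉ N u` it is `0`.
-/

open Finset

theorem Fintype.sum_comp_eval_eq_sum_mul_card {ι R : Type*} [Fintype ι] [DecidableEq ι]
    [NonAssocSemiring R] {β : ι → Type*} [∀ j, Fintype (β j)] (i : ι) (g : β i → R) :
    ∑ c : (∀ j, β j), g (c i) = (∑ b, g b) * Fintype.card (∀ j : {j // j ≠ i}, β j) := by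
  rw [Fintype.sum_equiv (Equiv.piSplitAt i β) (fun c => g (c i)) (fun p => g p.1) fun _ => rfl,
    Fintype.sum_prod_type, Finset.sum_mul]
  simp [Nat.cast_comm]

theorem Finset.filter_mem_powersetCard_eq_empty {α : Type*} [DecidableEq α] {t : Finset α}
    {v : α} (hv : v ∉ t) (k : ℕ) : {s ∈ t.powersetCard k | v ∈ s} = ∅ :=
  filter_eq_empty_iff.2 fun _ hs hvs => hv ((mem_powersetCard.1 hs).1 hvs)

theorem Finset.card_mul_card_filter_mem_powersetCard {α : Type*} [DecidableEq α] {t : Finset α}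
    {v : α} (hv : v ∈ t) (k : ℕ) :
    #t * #{s ∈ t.powersetCard k | v ∈ s} = k * #(t.powersetCard k) := by
  cases k with
  | zero => simp
  | succ j =>
    obtain ⟨m, hm⟩ : ∃ m, #t = m + 1 := Nat.exists_eq_add_one.2 (card_pos.2 ⟨v, hv⟩)
    have hcount : #{s ∈ t.powersetCard (j + 1) | v ∈ s} = m.choose j := by
      simpa [hm] using card_filter_powersetCard_subset {v} t (j + 1)
        (singleton_subset_iff.2 hv) (by simp)
    rw [hcount, card_powersetCard, hm, Nat.add_one_mul_choose_eq, mul_comm]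

theorem gttf_average_realizable_adjacency_general
    {V : Type*} [Fintype V] [DecidableEq V]
    (A : Matrix V V ℝ) (h01 : ∀ a b, A a b = 0 ∨ A a b = 1)
    (N : V → Finset V) (hN : ∀ a b, b ∈ N a ↔ A a b = 1)
    (α : ℕ) (hreg : ∀ u, (N u).card = α)
    (f : ℕ) :
    ∀ u v : V,
      (α : ℝ) *
          ∑ c : (∀ w : V, {s : Finset V // s ∈ (N w).powersetCard f}),
            (if v ∈ (c u : Finset V) then (1 : ℝ) else 0)
        = (Fintype.card (∀ w : V, {s : Finset V // s ∈ (N w).powersetCard f}) : ℝ) *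
            (f : ℝ) * A u v := by
  intro u v
  let β : V → Type _ := fun w => {s : Finset V // s ∈ (N w).powersetCard f}
  have hcard : Fintype.card (∀ w, β w) =
      #((N u).powersetCard f) * Fintype.card (∀ w : {w // w ≠ u}, β w) := by
    rw [Fintype.card_congr (Equiv.piSplitAt u β), Fintype.card_prod, Fintype.card_coe]
  rw [Fintype.sum_comp_eval_eq_sum_mul_card u fun s : β u => if v ∈ (s : Finset V) then 1 else 0,
    sum_coe_sort ((N u).powersetCard f) fun s => if v ∈ s then (1 : ℝ) else 0, sum_boole, hcard]
  by_cases hv : v ∈ N u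
  · have hcount := card_mul_card_filter_mem_powersetCard hv f
    rw [hreg u] at hcount
    rw [(hN u v).1 hv, mul_one]
    norm_cast
    rw [← mul_assoc, hcount]
    ring
  · have hA : A u v = 0 := (h01 u v).resolve_right fun h => hv ((hN u v).2 h)
    rw [filter_mem_powersetCard_eq_empty hv, hA]
    simp

/-- Claim from the proof of Proposition 6 (UnbiasedLearnMP): for an α-regular
graph (every node has exactly α out-neighbors), the average over all
GTTF-realizable adjacency matrices — each retaining, for every node, some
`f`-element subset of its α outgoing neighbors — is proportional entrywise to
the full adjacency matrix `A`, with proportionality constant `f/α`: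
`α * ∑_c Ã(c) u v = |C| * f * A u v`. -/
theorem gttf_average_realizable_adjacency
    {V : Type*} [Fintype V] [Nonempty V] [DecidableEq V]
    (A : Matrix V V ℝ) (h01 : ∀ a b, A a b = 0 ∨ A a b = 1)
    (N : V → Finset V) (hN : ∀ a b, b ∈ N a ↔ A a b = 1)
    (α : ℕ) (hreg : ∀ u, (N u).card = α)
    (f : ℕ) (hf1 : 1 ≤ f) (hf2 : f ≤ α) :
    ∀ u v : V,
      (α : ℝ) *
          ∑ c : (∀ w : V, {s : Finset V // s ∈ (N w).powersetCard f}),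
            (if v ∈ (c u : Finset V) then (1 : ℝ) else 0)
        = (Fintype.card (∀ w : V, {s : Finset V // s ∈ (N w).powersetCard f}) : ℝ) *
            (f : ℝ) * A u v :=
  gttf_average_realizable_adjacency_general A h01 N hN α hreg f
end
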